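/- arXiv:2605.02851 — 2 statements merged into one kernel-verified Lean document; each statement's English description precedes it below -/
import Mathlib

section
/- Let (Ω, ℱ, P) be a probability space, let (𝒲, 𝒜) be a measurable space, let W : Ω → 𝒲 be measurable, let A : Ω → {0, 1} ⊂ ℝ be a random variable, and let Y¹ : Ω → ℝ be integrable. Let g : 𝒲 → ℝ be measurable with δ ≤ g(w) ≤ 1 − δ for all w, for some δ ∈ (0, 1/2). Assume the randomization condition E[A ∣ σ(W, Y¹)] = g(W) almost surely. Then E[ (A / g(W)) · Y¹ ] = E[Y¹]. -/
open MeasureTheory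

/-- Inverse-probability-weighting identification of the treated mean:
under randomization (`E[A ∣ σ(W, Y¹)] = g(W)` a.s.) and positivity
(`δ ≤ g ≤ 1 − δ`), `E[(A / g(W)) Y¹] = E[Y¹]`. -/
theorem ipw_identifies_treated_mean
    {Ω : Type*} [MeasurableSpace Ω] (P : Measure Ω) [IsProbabilityMeasure P]
    {𝒲 : Type*} [m𝒲 : MeasurableSpace 𝒲]
    (W : Ω → 𝒲) (hW : Measurable W)
    (A : Ω → ℝ) (hA : Measurable A) (hA01 : ∀ ω, A ω = 0 ∨ A ω = 1)
    (Y1 : Ω → ℝ) (hY1meas : Measurable Y1) (hY1 : Integrable Y1 P)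
    (g : 𝒲 → ℝ) (hg : Measurable g)
    (δ : ℝ) (hδ0 : 0 < δ) (hδhalf : δ < 1 / 2)
    (hgb : ∀ w, δ ≤ g w ∧ g w ≤ 1 - δ)
    (hrand :
      P[A | MeasurableSpace.comap W m𝒲 ⊔
        MeasurableSpace.comap Y1 Real.measurableSpace]
        =ᵐ[P] fun ω => g (W ω)) :
    ∫ ω, (A ω / g (W ω)) * Y1 ω ∂P = ∫ ω, Y1 ω ∂P := by
  have hm : (MeasurableSpace.comap W m𝒲 ⊔
      MeasurableSpace.comap Y1 Real.measurableSpace) ≤ ‹MeasurableSpace Ω› :=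
    sup_le hW.comap_le hY1meas.comap_le
  set m := MeasurableSpace.comap W m𝒲 ⊔ MeasurableSpace.comap Y1 Real.measurableSpace
    with hm_def
  have hgWpos : ∀ ω, 0 < g (W ω) := fun ω => lt_of_lt_of_le hδ0 (hgb (W ω)).1
  have hWm : Measurable[m] W := Measurable.of_comap_le le_sup_left
  have hY1m : Measurable[m] Y1 := Measurable.of_comap_le le_sup_right
  have hfm : StronglyMeasurable[m] (fun ω => Y1 ω / g (W ω)) :=
    (hY1m.div (hg.comp hWm)).stronglyMeasurable
  have hAbd : ∀ ω, |A ω| ≤ 1 := by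
    intro ω; rcases hA01 ω with h | h <;> simp [h]
  have hAint : Integrable A P :=
    (integrable_const 1).mono' hA.aestronglyMeasurable (Filter.Eventually.of_forall hAbd)
  have hfAint : Integrable (fun ω => Y1 ω / g (W ω) * A ω) P := by
    refine (hY1.abs.const_mul (1 / δ)).mono'
      (((hY1meas.div (hg.comp hW)).mul hA).aestronglyMeasurable)
      (Filter.Eventually.of_forall fun ω => ?_)
    have h1 : |Y1 ω / g (W ω)| ≤ |Y1 ω| / δ := by
      rw [abs_div, abs_of_pos (hgWpos ω)]
      exact div_le_div_of_nonneg_left (abs_nonneg _) hδ0 (hgb (W ω)).1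
    calc |Y1 ω / g (W ω) * A ω| = |Y1 ω / g (W ω)| * |A ω| := abs_mul _ _
      _ ≤ |Y1 ω| / δ * 1 := mul_le_mul h1 (hAbd ω) (abs_nonneg _) (by positivity)
      _ = 1 / δ * |Y1 ω| := by ring
  haveI : SigmaFinite (P.trim hm) := by
    have : IsFiniteMeasure (P.trim hm) := isFiniteMeasure_trim hm
    infer_instance
  have hpull := condExp_mul_of_stronglyMeasurable_left hfm hfAint hAint
  have key : (fun ω => Y1 ω / g (W ω) * A ω) =ᵐ[P] fun ω => A ω / g (W ω) * Y1 ω :=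
    Filter.Eventually.of_forall fun ω => by ring
  calc ∫ ω, (A ω / g (W ω)) * Y1 ω ∂P
      = ∫ ω, Y1 ω / g (W ω) * A ω ∂P := integral_congr_ae key.symm
    _ = ∫ ω, (P[fun ω => Y1 ω / g (W ω) * A ω | m]) ω ∂P := (integral_condExp hm).symm
    _ = ∫ ω, Y1 ω ∂P := by
        refine integral_congr_ae ?_
        have h2 : (P[fun ω => Y1 ω / g (W ω) * A ω | m]) =ᵐ[P]
            fun ω => Y1 ω / g (W ω) * g (W ω) := by
          refine hpull.trans ?_
          filter_upwards [hrand] with ω hω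
          simp only [Pi.mul_apply]
          rw [hω]
        refine h2.trans (Filter.Eventually.of_forall fun ω => ?_)
        show Y1 ω / g (W ω) * g (W ω) = Y1 ω
        rw [div_mul_cancel₀ _ (ne_of_gt (hgWpos ω))]
end

section
/- Let (Ω, ℱ, P) be a probability space, let (𝒲, 𝒜) be a measurable space, let W : Ω → 𝒲 be measurable, let A : Ω → {0, 1} ⊂ ℝ be a random variable, and let Y : Ω → ℝ be bounded measurable. Let g₀ : 𝒲 → ℝ be measurable with δ ≤ g₀(w) ≤ 1 − δ for some δ ∈ (0, 1/2) and E[A ∣ σ(W)] = g₀(W) almost surely, and let Q̄₀ : {0,1} × 𝒲 → ℝ be bounded measurable with E[Y ∣ σ(A, W)] = Q̄₀(A, W) almost surely. Then for EVERY bounded measurable Q̄ : {0,1} × 𝒲 → ℝ (not necessarily equal to Q̄₀), E[ (A/g₀(W))·(Y − Q̄(1, W)) − ((1 − A)/(1 − g₀(W)))·(Y − Q̄(0, W)) + Q̄(1, W) − Q̄(0, W) ] = E[ Q̄₀(1, W) − Q̄₀(0, W) ]. -/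
/-!
Write `p = g₀(W)`. For any `σ(W)`-measurable bounded `h`, conditioning on `W` replaces the
weight `A / p` by `E[A ∣ W] / p = 1`, so `E[(A / p) h] = E[h]`; conditioning `Y` on `(A, W)`
first turns `E[(A / p) Y]` into `E[(A / p) Q̄₀(1, W)] = E[Q̄₀(1, W)]`. Hence the treated arm
`(A / p)(Y - Q̄(1, W)) + Q̄(1, W)` has mean `E[Q̄₀(1, W)]` whatever `Q̄` is; the control arm is
the same argument with `1 - A` and `1 - p`.
-/

open MeasureTheory
open scoped ENNReal

section

variable {Ω : Type*} {mΩ : MeasurableSpace Ω} {μ : Measure Ω}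

theorem memLp_top_div_of_le {B p : Ω → ℝ} (hB : MemLp B ∞ μ) (hp : AEMeasurable p μ)
    {δ : ℝ} (hδ : 0 < δ) (hpδ : ∀ ω, δ ≤ p ω) : MemLp (fun ω => B ω / p ω) ∞ μ := by
  have hinv : MemLp (fun ω => (p ω)⁻¹) ∞ μ := by
    refine memLp_top_of_bound hp.inv.aestronglyMeasurable δ⁻¹ (ae_of_all _ fun ω => ?_)
    rw [norm_inv, Real.norm_of_nonneg (hδ.le.trans (hpδ ω))]
    exact inv_anti₀ hδ (hpδ ω)
  simpa only [div_eq_mul_inv] using hinv.mul' hB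

theorem condExp_const_sub [IsFiniteMeasure μ] {m : MeasurableSpace Ω} (hm : m ≤ mΩ) (c : ℝ)
    {f : Ω → ℝ} (hf : Integrable f μ) :
    μ[fun ω => c - f ω | m] =ᵐ[μ] fun ω => c - μ[f | m] ω := by
  have h := condExp_sub (integrable_const c) hf m
  rwa [condExp_const hm] at h

theorem integral_mul_condExp_of_stronglyMeasurable {m : MeasurableSpace Ω} (hm : m ≤ mΩ)
    [SigmaFinite (μ.trim hm)] {f g : Ω → ℝ} (hf : StronglyMeasurable[m] f)
    (hfg : Integrable (f * g) μ) (hg : Integrable g μ) :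
    ∫ ω, f ω * μ[g | m] ω ∂μ = ∫ ω, f ω * g ω ∂μ :=
  calc ∫ ω, f ω * μ[g | m] ω ∂μ = ∫ ω, μ[f * g | m] ω ∂μ :=
        integral_congr_ae (condExp_mul_of_stronglyMeasurable_left hf hfg hg).symm
    _ = ∫ ω, f ω * g ω ∂μ := integral_condExp hm

theorem integral_div_mul_eq_of_condExp_eq {m : MeasurableSpace Ω} (hm : m ≤ mΩ)
    [SigmaFinite (μ.trim hm)] {B p h : Ω → ℝ} (hcond : μ[B | m] =ᵐ[μ] p) (hp : ∀ ω, p ω ≠ 0)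
    (hhp : StronglyMeasurable[m] (h / p)) (hB : Integrable B μ)
    (hBhp : Integrable (h / p * B) μ) :
    ∫ ω, B ω / p ω * h ω ∂μ = ∫ ω, h ω ∂μ :=
  calc ∫ ω, B ω / p ω * h ω ∂μ = ∫ ω, (h / p) ω * B ω ∂μ := by
        congr 1 with ω
        simp only [Pi.div_apply]
        ring
    _ = ∫ ω, (h / p) ω * μ[B | m] ω ∂μ :=
        (integral_mul_condExp_of_stronglyMeasurable hm hhp hBhp hB).symm
    _ = ∫ ω, h ω ∂μ := integral_congr_ae <| hcond.mono fun ω hω => by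
        simp only [Pi.div_apply, hω, div_mul_cancel₀ _ (hp ω)]

/-- The augmented IPW term of one treatment arm: `B` indicates the arm, `p` is its propensity
and `q` the initial outcome regression. -/
noncomputable def aipwArm (B p Y q : Ω → ℝ) (ω : Ω) : ℝ := B ω / p ω * (Y ω - q ω) + q ω

theorem memLp_top_aipwArm {B p Y q : Ω → ℝ} (hB : MemLp B ∞ μ) (hp : AEMeasurable p μ)
    {δ : ℝ} (hδ : 0 < δ) (hpδ : ∀ ω, δ ≤ p ω) (hY : MemLp Y ∞ μ) (hq : MemLp q ∞ μ) :
    MemLp (aipwArm B p Y q) ∞ μ :=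
  ((hY.sub hq).mul' (memLp_top_div_of_le hB hp hδ hpδ)).add hq

theorem integral_aipwArm [IsFiniteMeasure μ] {m m' : MeasurableSpace Ω} (hmm' : m ≤ m')
    (hm' : m' ≤ mΩ) {δ : ℝ} (hδ : 0 < δ) {B p Y q r : Ω → ℝ}
    (hBm : Measurable[m'] B) (hB : MemLp B ∞ μ)
    (hpm : Measurable[m] p) (hpδ : ∀ ω, δ ≤ p ω) (hcond : μ[B | m] =ᵐ[μ] p)
    (hY : MemLp Y ∞ μ) (hYcond : (fun ω => B ω * μ[Y | m'] ω) =ᵐ[μ] fun ω => B ω * r ω)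
    (hqm : Measurable[m] q) (hq : MemLp q ∞ μ) (hrm : Measurable[m] r) (hr : MemLp r ∞ μ) :
    ∫ ω, aipwArm B p Y q ω ∂μ = ∫ ω, r ω ∂μ := by
  have hm : m ≤ mΩ := hmm'.trans hm'
  have hp0 : ∀ ω, p ω ≠ 0 := fun ω => (hδ.trans_le (hpδ ω)).ne'
  have hpμ : AEMeasurable p μ := (hpm.mono hm le_rfl).aemeasurable
  have hw : MemLp (fun ω => B ω / p ω) ∞ μ := memLp_top_div_of_le hB hpμ hδ hpδ
  have hwY : ∫ ω, B ω / p ω * Y ω ∂μ = ∫ ω, r ω ∂μ :=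
    calc ∫ ω, B ω / p ω * Y ω ∂μ = ∫ ω, B ω / p ω * μ[Y | m'] ω ∂μ :=
          (integral_mul_condExp_of_stronglyMeasurable hm'
            (hBm.div (hpm.mono hmm' le_rfl)).stronglyMeasurable
            ((hY.mul' hw).integrable le_top) (hY.integrable le_top)).symm
      _ = ∫ ω, B ω / p ω * r ω ∂μ := integral_congr_ae <| hYcond.mono fun ω hω => by
          dsimp only at hω ⊢
          rw [div_mul_eq_mul_div, hω, div_mul_eq_mul_div]
      _ = ∫ ω, r ω ∂μ :=
          integral_div_mul_eq_of_condExp_eq hm hcond hp0 (hrm.div hpm).stronglyMeasurable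
            (hB.integrable le_top) ((hB.mul' (memLp_top_div_of_le hr hpμ hδ hpδ)).integrable le_top)
  have hwq : ∫ ω, B ω / p ω * q ω ∂μ = ∫ ω, q ω ∂μ :=
    integral_div_mul_eq_of_condExp_eq hm hcond hp0 (hqm.div hpm).stronglyMeasurable
      (hB.integrable le_top) ((hB.mul' (memLp_top_div_of_le hq hpμ hδ hpδ)).integrable le_top)
  have hsplit : aipwArm B p Y q = fun ω => B ω / p ω * Y ω - B ω / p ω * q ω + q ω := by
    ext ω
    simp only [aipwArm]
    ring
  rw [hsplit, integral_add _ (hq.integrable le_top), integral_sub, hwY, hwq, sub_add_cancel]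
  · exact (hY.mul' hw).integrable le_top
  · exact (hq.mul' hw).integrable le_top
  · exact ((hY.mul' hw).sub (hq.mul' hw)).integrable le_top

end

theorem aipw_exactly_unbiased_known_propensity_general
    {Ω : Type*} [MeasurableSpace Ω] (P : Measure Ω) [IsProbabilityMeasure P]
    {𝒲 : Type*} [m𝒲 : MeasurableSpace 𝒲]
    (W : Ω → 𝒲) (hW : Measurable W)
    (A : Ω → ℝ) (hA : Measurable A) (hA01 : ∀ ω, A ω = 0 ∨ A ω = 1)
    (Y : Ω → ℝ) (hYmeas : Measurable Y) (CY : ℝ) (hYbdd : ∀ ω, |Y ω| ≤ CY)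
    (g₀ : 𝒲 → ℝ) (hg₀ : Measurable g₀)
    (δ : ℝ) (hδ0 : 0 < δ)
    (hg₀b : ∀ w, δ ≤ g₀ w ∧ g₀ w ≤ 1 - δ)
    (hrand : P[A | MeasurableSpace.comap W m𝒲] =ᵐ[P] fun ω => g₀ (W ω))
    (Q₀ : ℝ → 𝒲 → ℝ) (hQ₀meas : ∀ a, Measurable (Q₀ a))
    (C₀ : ℝ) (hQ₀bdd : ∀ a w, |Q₀ a w| ≤ C₀)
    (hQ₀ : P[Y | MeasurableSpace.comap A Real.measurableSpace ⊔
        MeasurableSpace.comap W m𝒲]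
      =ᵐ[P] fun ω => Q₀ (A ω) (W ω)) :
    ∀ (Q : ℝ → 𝒲 → ℝ), (∀ a, Measurable (Q a)) → ∀ C : ℝ, (∀ a w, |Q a w| ≤ C) →
      ∫ ω, (A ω / g₀ (W ω) * (Y ω - Q 1 (W ω))
          - (1 - A ω) / (1 - g₀ (W ω)) * (Y ω - Q 0 (W ω))
          + Q 1 (W ω) - Q 0 (W ω)) ∂P
        = ∫ ω, (Q₀ 1 (W ω) - Q₀ 0 (W ω)) ∂P := by
  intro Q hQ C hQC
  have hmAW : MeasurableSpace.comap A Real.measurableSpace ⊔ MeasurableSpace.comap W m𝒲 ≤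
      ‹MeasurableSpace Ω› := sup_le hA.comap_le hW.comap_le
  set mW := MeasurableSpace.comap W m𝒲
  set mAW := MeasurableSpace.comap A Real.measurableSpace ⊔ mW
  have hmW : mW ≤ mAW := le_sup_right
  have hAm : Measurable[mAW] A := (comap_measurable A).mono le_sup_left le_rfl
  have hWm : Measurable[mW] W := comap_measurable W
  have hAμ : MemLp A ∞ P := memLp_top_of_bound hA.aestronglyMeasurable 1 <|
    ae_of_all _ fun ω => by rcases hA01 ω with h | h <;> simp [h]
  have hYμ : MemLp Y ∞ P := memLp_top_of_bound hYmeas.aestronglyMeasurable CY (ae_of_all _ hYbdd)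
  have hQμ a : MemLp (fun ω => Q a (W ω)) ∞ P :=
    memLp_top_of_bound ((hQ a).comp hW).aestronglyMeasurable C (ae_of_all _ (hQC a <| W ·))
  have hQ₀μ a : MemLp (fun ω => Q₀ a (W ω)) ∞ P :=
    memLp_top_of_bound ((hQ₀meas a).comp hW).aestronglyMeasurable C₀ (ae_of_all _ (hQ₀bdd a <| W ·))
  have hδ₁ ω : δ ≤ g₀ (W ω) := (hg₀b (W ω)).1
  have hδ₀ ω : δ ≤ 1 - g₀ (W ω) := by linarith [(hg₀b (W ω)).2]
  have hY₁ : (fun ω => A ω * P[Y | mAW] ω) =ᵐ[P] fun ω => A ω * Q₀ 1 (W ω) :=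
    hQ₀.mono fun ω hω => by rcases hA01 ω with h | h <;> simp [hω, h]
  have hY₀ : (fun ω => (1 - A ω) * P[Y | mAW] ω) =ᵐ[P] fun ω => (1 - A ω) * Q₀ 0 (W ω) :=
    hQ₀.mono fun ω hω => by rcases hA01 ω with h | h <;> simp [hω, h]
  have hrand₀ : P[fun ω => 1 - A ω | mW] =ᵐ[P] fun ω => 1 - g₀ (W ω) :=
    (condExp_const_sub (hmW.trans hmAW) 1 (hAμ.integrable le_top)).trans
      (hrand.mono fun ω hω => by simp only [hω])
  have arm₁ : ∫ ω, aipwArm A (fun ω => g₀ (W ω)) Y (fun ω => Q 1 (W ω)) ω ∂P =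
      ∫ ω, Q₀ 1 (W ω) ∂P :=
    integral_aipwArm hmW hmAW hδ0 hAm hAμ (hg₀.comp hWm) hδ₁ hrand hYμ hY₁
      ((hQ 1).comp hWm) (hQμ 1) ((hQ₀meas 1).comp hWm) (hQ₀μ 1)
  have arm₀ : ∫ ω, aipwArm (fun ω => 1 - A ω) (fun ω => 1 - g₀ (W ω)) Y (fun ω => Q 0 (W ω)) ω ∂P =
      ∫ ω, Q₀ 0 (W ω) ∂P :=
    integral_aipwArm hmW hmAW hδ0 (measurable_const.sub hAm) ((memLp_top_const 1).sub hAμ)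
      ((measurable_const.sub hg₀).comp hWm) hδ₀ hrand₀ hYμ hY₀
      ((hQ 0).comp hWm) (hQμ 0) ((hQ₀meas 0).comp hWm) (hQ₀μ 0)
  calc _ = ∫ ω, (aipwArm A (fun ω => g₀ (W ω)) Y (fun ω => Q 1 (W ω)) ω -
        aipwArm (fun ω => 1 - A ω) (fun ω => 1 - g₀ (W ω)) Y (fun ω => Q 0 (W ω)) ω) ∂P := by
        congr 1 with ω
        simp only [aipwArm]
        ring
    _ = _ := by
        rw [integral_sub, arm₁, arm₀,
          integral_sub ((hQ₀μ 1).integrable le_top) ((hQ₀μ 0).integrable le_top)]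
        · exact (memLp_top_aipwArm hAμ (hg₀.comp hW).aemeasurable hδ0 hδ₁ hYμ (hQμ 1)).integrable
            le_top
        · exact (memLp_top_aipwArm ((memLp_top_const 1).sub hAμ)
            ((measurable_const.sub hg₀).comp hW).aemeasurable hδ0 hδ₀ hYμ (hQμ 0)).integrable le_top

/-- In a randomized trial with known treatment mechanism `g₀` bounded
away from 0 and 1, the augmented inverse-probability-weighted estimand is exactly
unbiased for the ATE for EVERY (bounded measurable) initial outcome regression `Q̄`:
the exact second-order remainder vanishes when the treatment mechanism is known. -/
theorem aipw_exactly_unbiased_known_propensity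
    {Ω : Type*} [MeasurableSpace Ω] (P : Measure Ω) [IsProbabilityMeasure P]
    {𝒲 : Type*} [m𝒲 : MeasurableSpace 𝒲]
    (W : Ω → 𝒲) (hW : Measurable W)
    (A : Ω → ℝ) (hA : Measurable A) (hA01 : ∀ ω, A ω = 0 ∨ A ω = 1)
    (Y : Ω → ℝ) (hYmeas : Measurable Y) (CY : ℝ) (hYbdd : ∀ ω, |Y ω| ≤ CY)
    (g₀ : 𝒲 → ℝ) (hg₀ : Measurable g₀)
    (δ : ℝ) (hδ0 : 0 < δ) (hδhalf : δ < 1 / 2)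
    (hg₀b : ∀ w, δ ≤ g₀ w ∧ g₀ w ≤ 1 - δ)
    (hrand : P[A | MeasurableSpace.comap W m𝒲] =ᵐ[P] fun ω => g₀ (W ω))
    (Q₀ : ℝ → 𝒲 → ℝ) (hQ₀meas : ∀ a, Measurable (Q₀ a))
    (C₀ : ℝ) (hQ₀bdd : ∀ a w, |Q₀ a w| ≤ C₀)
    (hQ₀ : P[Y | MeasurableSpace.comap A Real.measurableSpace ⊔
        MeasurableSpace.comap W m𝒲]
      =ᵐ[P] fun ω => Q₀ (A ω) (W ω)) :
    ∀ (Q : ℝ → 𝒲 → ℝ), (∀ a, Measurable (Q a)) → ∀ C : ℝ, (∀ a w, |Q a w| ≤ C) →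
      ∫ ω, (A ω / g₀ (W ω) * (Y ω - Q 1 (W ω))
          - (1 - A ω) / (1 - g₀ (W ω)) * (Y ω - Q 0 (W ω))
          + Q 1 (W ω) - Q 0 (W ω)) ∂P
        = ∫ ω, (Q₀ 1 (W ω) - Q₀ 0 (W ω)) ∂P :=
  aipw_exactly_unbiased_known_propensity_general P (m𝒲 := m𝒲) W hW A hA hA01 Y hYmeas CY hYbdd g₀
    hg₀ δ hδ0 hg₀b hrand Q₀ hQ₀meas C₀ hQ₀bdd hQ₀
end
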